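/- Let (P, ≼, ∧, ∨) be a locally finite lattice with least element 0̂, let f be a semimultiplicative complex-valued function on P with f(x) ≠ 0 for all x ∈ P, and let S = {x_1, …, x_n} be a finite meet closed subset of P with distinct elements, indexed so that x_i ≼ x_j only if i ≤ j. Assume d_i = ∑_{z ≼ x_i, z ⋠ x_j for all j < i} (f_d * μ)(0̂, z) ≠ 0 for all i ∈ {1, …, n}. Then for every λ ∈ ℂ: there exists a nonzero x ∈ ℂⁿ with [S]_f x = λ (S)_f x if and only if there exists a nonzero y ∈ ℂⁿ with D⁻¹ B y = λ y, where D = diag(d_1, …, d_n), B = E⁻¹ [S]_f (E⁻¹)ᵀ, and E is the n×n matrix with E_{ij} = 1 if x_j ≼ x_i and E_{ij} = 0 otherwise. -/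

import Mathlib

/-!
Write `T_k` (`freshBelow x k`) for the set of `z ≼ x_k` lying below no earlier `x_j`, so that
`d_k = ∑_{z ∈ T_k} (f_d * μ)(0̂, z)`. Since `S` is meet closed and the indexing is a linear
extension, the `T_k` with `x_k ≼ x_m` partition the down-set of `x_m`: a `z ≼ x_m` lies in `T_k`
for the least `k` with `z ≼ x_k`, and `x_k ∧ x_m` is some `x_l` with `l = k`. Möbius inversion
then gives `∑_{x_k ≼ x_i ∧ x_j} d_k = f(x_i ∧ x_j)`, i.e. `(S)_f = E D Eᵀ`. As `E` is
unitriangular, substituting `y = Eᵀ v` turns `[S]_f v = λ E D Eᵀ v` into `D⁻¹ B y = λ y`.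
-/

open Matrix Finset Function

namespace Matrix

variable {ι K : Type*} [Fintype ι] [DecidableEq ι] [Field K]

theorem exists_ne_zero_mulVec_eq_smul_mul_mul_transpose_iff (A E D : Matrix ι ι K)
    (hE : IsUnit E.det) (hD : IsUnit D.det) (lam : K) :
    (∃ v, v ≠ 0 ∧ A *ᵥ v = lam • (E * D * Eᵀ) *ᵥ v) ↔
      ∃ y, y ≠ 0 ∧ (D⁻¹ * (E⁻¹ * A * E⁻¹ᵀ)) *ᵥ y = lam • y := by
  set G := E * D
  have hG : IsUnit G.det := by rw [det_mul]; exact hE.mul hD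
  have hEt : IsUnit Eᵀ.det := isUnit_det_transpose E hE
  have hGinv : Injective G⁻¹.mulVec :=
    mulVec_injective_of_isUnit ((isUnit_iff_isUnit_det _).2 (isUnit_nonsing_inv_det _ hG))
  have hinv : D⁻¹ * (E⁻¹ * A * E⁻¹ᵀ) * Eᵀ = G⁻¹ * A := by
    rw [mul_inv_rev, transpose_nonsing_inv, Matrix.mul_assoc,
      nonsing_inv_mul_cancel_right _ _ hEt, Matrix.mul_assoc]
  have hsubst : ∀ v, (D⁻¹ * (E⁻¹ * A * E⁻¹ᵀ)) *ᵥ (Eᵀ *ᵥ v) = lam • Eᵀ *ᵥ v ↔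
      A *ᵥ v = lam • (G * Eᵀ) *ᵥ v := by
    intro v
    have hrhs : lam • Eᵀ *ᵥ v = G⁻¹ *ᵥ (lam • (G * Eᵀ) *ᵥ v) := by
      rw [mulVec_smul, mulVec_mulVec, nonsing_inv_mul_cancel_left _ _ hG]
    rw [mulVec_mulVec, hinv, ← mulVec_mulVec, hrhs, hGinv.eq_iff]
  have hsurj : Surjective Eᵀ.mulVec :=
    mulVec_surjective_iff_isUnit.2 ((isUnit_iff_isUnit_det _).2 hEt)
  have hinj : Injective Eᵀ.mulVec :=
    mulVec_injective_of_isUnit ((isUnit_iff_isUnit_det _).2 hEt)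
  refine Iff.trans ?_ hsurj.exists.symm
  simp only [hsubst, hinj.ne_iff' (mulVec_zero _)]

end Matrix

theorem sum_Icc_moebius_of_lt {P R : Type*} [PartialOrder P] [LocallyFiniteOrder P] [Ring R]
    (mu : P → P → R) (hmu_lt : ∀ p q : P, p < q → mu p q = -∑ r ∈ Ico p q, mu p r)
    {p q : P} (hpq : p < q) : ∑ r ∈ Icc p q, mu p r = 0 := by
  rw [Icc_eq_cons_Ico hpq.le, sum_cons, hmu_lt p q hpq, neg_add_cancel]

theorem sum_Icc_bot_sum_Icc_bot_mul_moebius {P R : Type*} [PartialOrder P] [OrderBot P]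
    [LocallyFiniteOrder P] [Ring R] (mu : P → P → R) (hmu_self : ∀ p, mu p p = 1)
    (hmu_lt : ∀ p q : P, p < q → mu p q = -∑ r ∈ Ico p q, mu p r) (f : P → R) (p : P) :
    ∑ z ∈ Icc ⊥ p, ∑ w ∈ Icc ⊥ z, f w * mu w z = f p := by
  have hswap : ∀ z w, z ∈ Icc ⊥ p ∧ w ∈ Icc ⊥ z ↔ z ∈ Icc w p ∧ w ∈ Icc ⊥ p := by
    simp only [mem_Icc, bot_le, true_and]
    exact fun z w => ⟨fun ⟨hzp, hwz⟩ => ⟨⟨hwz, hzp⟩, hwz.trans hzp⟩,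
      fun ⟨⟨hwz, hzp⟩, _⟩ => ⟨hzp, hwz⟩⟩
  rw [sum_comm' hswap, sum_eq_single_of_mem p (mem_Icc.2 ⟨bot_le, le_rfl⟩)]
  · simp [hmu_self]
  · intro w hw hwp
    rw [← mul_sum, sum_Icc_moebius_of_lt mu hmu_lt (lt_of_le_of_ne (mem_Icc.1 hw).2 hwp),
      mul_zero]

section FreshBelow

variable {P ι : Type*} [Fintype ι] [LinearOrder ι]

def freshBelow [Preorder P] [OrderBot P] [LocallyFiniteOrder P]
    [DecidableRel ((· ≤ ·) : P → P → Prop)] (x : ι → P) (k : ι) : Finset P :=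
  (Icc ⊥ (x k)).filter (fun z => ∀ j, j < k → ¬ z ≤ x j)

theorem pairwise_disjoint_freshBelow [Preorder P] [OrderBot P] [LocallyFiniteOrder P]
    [DecidableRel ((· ≤ ·) : P → P → Prop)] (x : ι → P) :
    Pairwise (Disjoint on freshBelow x) := by
  intro a b hab
  refine disjoint_left.2 fun z hza hzb => ?_
  simp only [freshBelow, mem_filter, mem_Icc] at hza hzb
  rcases hab.lt_or_gt with h | h
  · exact hzb.2 a h hza.1.2
  · exact hza.2 b h hzb.1.2

variable [SemilatticeInf P] [OrderBot P] [LocallyFiniteOrder P]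
  [DecidableRel ((· ≤ ·) : P → P → Prop)] {x : ι → P}

theorem exists_le_mem_freshBelow (hord : ∀ i j, x i ≤ x j → i ≤ j)
    (hmeet : ∀ i j, ∃ k, x k = x i ⊓ x j) {z : P} {m : ι} (hzm : z ≤ x m) :
    ∃ k, x k ≤ x m ∧ z ∈ freshBelow x k := by
  have hne : (univ.filter fun k => z ≤ x k).Nonempty := ⟨m, by simpa using hzm⟩
  set k := (univ.filter fun k => z ≤ x k).min' hne
  have hzk : z ≤ x k := by simpa using min'_mem _ hne
  have hmin : ∀ j, z ≤ x j → k ≤ j := fun j hzj => min'_le _ j (by simpa using hzj)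
  obtain ⟨l, hl⟩ := hmeet k m
  have hlk : l = k := le_antisymm (hord l k (hl ▸ inf_le_left)) (hmin l (hl ▸ le_inf hzk hzm))
  refine ⟨k, hlk ▸ hl ▸ inf_le_right, ?_⟩
  simp only [freshBelow, mem_filter, mem_Icc]
  exact ⟨⟨bot_le, hzk⟩, fun j hjk hzj => (hmin j hzj).not_gt hjk⟩

theorem sum_sum_freshBelow {M : Type*} [AddCommMonoid M] (hord : ∀ i j, x i ≤ x j → i ≤ j)
    (hmeet : ∀ i j, ∃ k, x k = x i ⊓ x j) (g : P → M) (m : ι) :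
    ∑ k ∈ univ.filter (fun k => x k ≤ x m), ∑ z ∈ freshBelow x k, g z =
      ∑ z ∈ Icc ⊥ (x m), g z := by
  classical
  rw [← sum_biUnion ((pairwise_disjoint_freshBelow x).set_pairwise _)]
  congr 1
  ext z
  simp only [mem_biUnion, mem_filter, mem_univ, true_and, mem_Icc, bot_le]
  constructor
  · rintro ⟨k, hkm, hz⟩
    exact ((mem_Icc.1 (mem_filter.1 hz).1).2).trans hkm
  · exact exists_le_mem_freshBelow hord hmeet

end FreshBelow

def zetaMatrix {P ι : Type*} (R : Type*) [Zero R] [One R] [Preorder P]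
    [DecidableRel ((· ≤ ·) : P → P → Prop)] (x : ι → P) : Matrix ι ι R :=
  of fun i j => if x j ≤ x i then 1 else 0

theorem det_zetaMatrix {P ι R : Type*} [Fintype ι] [LinearOrder ι] [CommRing R] [Preorder P]
    [DecidableRel ((· ≤ ·) : P → P → Prop)] {x : ι → P} (hord : ∀ i j, x i ≤ x j → i ≤ j) :
    (zetaMatrix R x).det = 1 := by
  have hlower : (zetaMatrix R x).IsLowerTriangular := fun i j hji =>
    if_neg fun hle => (hord j i hle).not_gt hji
  rw [det_of_isLowerTriangular _ hlower]
  exact prod_eq_one fun i _ => if_pos le_rfl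

theorem zetaMatrix_mul_diagonal_mul_transpose_apply {P ι R : Type*} [Fintype ι] [DecidableEq ι]
    [NonAssocSemiring R] [SemilatticeInf P] [DecidableRel ((· ≤ ·) : P → P → Prop)]
    (x : ι → P) (d : ι → R) (i j : ι) :
    (zetaMatrix R x * diagonal d * (zetaMatrix R x)ᵀ) i j =
      ∑ k ∈ univ.filter (fun k => x k ≤ x i ⊓ x j), d k := by
  rw [mul_apply]
  simp only [mul_diagonal, transpose_apply, zetaMatrix, of_apply, le_inf_iff, sum_filter]
  refine sum_congr rfl fun k _ => ?_
  by_cases hi : x k ≤ x i <;> by_cases hj : x k ≤ x j <;> simp [hi, hj]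

theorem meetMatrix_eq_zetaMatrix_mul_diagonal_mul_transpose {P ι R : Type*} [Fintype ι]
    [LinearOrder ι] [Ring R] [Lattice P] [OrderBot P] [LocallyFiniteOrder P]
    [DecidableRel ((· ≤ ·) : P → P → Prop)] (mu : P → P → R) (hmu_self : ∀ p, mu p p = 1)
    (hmu_lt : ∀ p q : P, p < q → mu p q = -∑ r ∈ Ico p q, mu p r) (f : P → R) {x : ι → P}
    (hord : ∀ i j, x i ≤ x j → i ≤ j) (hmeet : ∀ i j, ∃ k, x k = x i ⊓ x j) :
    of (fun i j => f (x i ⊓ x j)) = zetaMatrix R x *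
      diagonal (fun k => ∑ z ∈ freshBelow x k, ∑ w ∈ Icc ⊥ z, f w * mu w z) *
        (zetaMatrix R x)ᵀ := by
  ext i j
  obtain ⟨m, hm⟩ := hmeet i j
  rw [zetaMatrix_mul_diagonal_mul_transpose_apply, ← hm, sum_sum_freshBelow hord hmeet,
    sum_Icc_bot_sum_Icc_bot_mul_moebius mu hmu_self hmu_lt, of_apply, hm]

theorem generalized_eigenvalues_join_wrt_meet_general
    {P : Type*} [Lattice P] [OrderBot P] [LocallyFiniteOrder P]
    [DecidableRel ((· ≤ ·) : P → P → Prop)]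
    (mu : P → P → ℂ)
    (hmu_self : ∀ p, mu p p = 1)
    (hmu_lt : ∀ p q : P, p < q → mu p q = -∑ r ∈ Finset.Ico p q, mu p r)
    (f : P → ℂ)
    {n : ℕ} (x : Fin n → P)
    (hord : ∀ i j, x i ≤ x j → i ≤ j)
    (hmeet : ∀ i j, ∃ k, x k = x i ⊓ x j)
    (d : Fin n → ℂ)
    (hd : ∀ i, d i = ∑ z ∈ (Finset.Icc ⊥ (x i)).filter
        (fun z => ∀ j, j < i → ¬ z ≤ x j),
      ∑ w ∈ Finset.Icc ⊥ z, f w * mu w z)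
    (hd0 : ∀ i, d i ≠ 0)
    (E : Matrix (Fin n) (Fin n) ℂ)
    (hE : ∀ i j, E i j = if x j ≤ x i then 1 else 0)
    (D B : Matrix (Fin n) (Fin n) ℂ)
    (hD : D = Matrix.diagonal d)
    (hB : B = E⁻¹ * (Matrix.of fun i j => f (x i ⊔ x j)) * (E⁻¹)ᵀ) :
    ∀ lam : ℂ,
      (∃ v : Fin n → ℂ, v ≠ 0 ∧
          (Matrix.of fun i j => f (x i ⊔ x j)).mulVec v =
            lam • (Matrix.of fun i j => f (x i ⊓ x j)).mulVec v) ↔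
        (∃ y : Fin n → ℂ, y ≠ 0 ∧ (D⁻¹ * B).mulVec y = lam • y) := by
  intro lam
  have hE' : E = zetaMatrix ℂ x := ext hE
  have hd' : d = fun k => ∑ z ∈ freshBelow x k, ∑ w ∈ Icc ⊥ z, f w * mu w z := by
    funext i
    rw [hd i, freshBelow]
    -- the two filters differ only in the `Decidable` instance for `∀ j < i, _`
    congr
  subst hD hB hE'
  rw [meetMatrix_eq_zetaMatrix_mul_diagonal_mul_transpose mu hmu_self hmu_lt f hord hmeet, ← hd']
  refine exists_ne_zero_mulVec_eq_smul_mul_mul_transpose_iff _ _ _ ?_ ?_ lam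
  · rw [det_zetaMatrix hord]
    exact isUnit_one
  · rw [det_diagonal]
    exact (prod_ne_zero_iff.2 fun i _ => hd0 i).isUnit

/-- Under invertibility of the meet matrix (encoded by `d i ≠ 0`), the
`(S)_f`-eigenvalues of `[S]_f` are precisely the eigenvalues of `D⁻¹ * B`, where
`D = diag(d)`, `B = E⁻¹ * [S]_f * (E⁻¹)ᵀ` and `E i j = 1` iff `x j ≼ x i`. -/
theorem generalized_eigenvalues_join_wrt_meet
    {P : Type*} [Lattice P] [OrderBot P] [LocallyFiniteOrder P]
    [DecidableRel ((· ≤ ·) : P → P → Prop)]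
    (mu : P → P → ℂ)
    (hmu_self : ∀ p, mu p p = 1)
    (hmu_lt : ∀ p q : P, p < q → mu p q = -∑ r ∈ Finset.Ico p q, mu p r)
    (hmu_nle : ∀ p q : P, ¬ p ≤ q → mu p q = 0)
    (f : P → ℂ) (hf : ∀ p, f p ≠ 0)
    (hsemi : ∀ p q : P, f (p ⊓ q) * f (p ⊔ q) = f p * f q)
    {n : ℕ} (x : Fin n → P) (hinj : Function.Injective x)
    (hord : ∀ i j, x i ≤ x j → i ≤ j)
    (hmeet : ∀ i j, ∃ k, x k = x i ⊓ x j)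
    (d : Fin n → ℂ)
    (hd : ∀ i, d i = ∑ z ∈ (Finset.Icc ⊥ (x i)).filter
        (fun z => ∀ j, j < i → ¬ z ≤ x j),
      ∑ w ∈ Finset.Icc ⊥ z, f w * mu w z)
    (hd0 : ∀ i, d i ≠ 0)
    (E : Matrix (Fin n) (Fin n) ℂ)
    (hE : ∀ i j, E i j = if x j ≤ x i then 1 else 0)
    (D B : Matrix (Fin n) (Fin n) ℂ)
    (hD : D = Matrix.diagonal d)
    (hB : B = E⁻¹ * (Matrix.of fun i j => f (x i ⊔ x j)) * (E⁻¹)ᵀ) :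
    ∀ lam : ℂ,
      (∃ v : Fin n → ℂ, v ≠ 0 ∧
          (Matrix.of fun i j => f (x i ⊔ x j)).mulVec v =
            lam • (Matrix.of fun i j => f (x i ⊓ x j)).mulVec v) ↔
        (∃ y : Fin n → ℂ, y ≠ 0 ∧ (D⁻¹ * B).mulVec y = lam • y) :=
  generalized_eigenvalues_join_wrt_meet_general mu hmu_self hmu_lt f x hord hmeet d hd hd0 E hE D B
    hD hB
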